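/- Define J(t) = (3/(2π)) · ∫_{−2√2}^{2√2} e^{s·t} · √(8 − s²)/(9 − s²) ds, define I_m(x) = ∑_{r=0}^∞ (x/2)^{m+2r}/(r!·(m+r)!) for integers m ≥ 0, and define F_ℓ(t) = ∑_{k=1}^∞ 2^{−kℓ/2}·I_{kℓ}(2√2·t) for integers ℓ ≥ 3. Then for every integer ℓ ≥ 3, F_ℓ(2/3) − 2·J(1/3)·F_ℓ(1/3) > 0. -/

import Mathlib

/-- The main term `J(t)` of the Ihara-Selberg trace formula for cubic graphs:
`J(t) = (3/(2π)) ∫_{-2√2}^{2√2} e^{st} √(8 - s²)/(9 - s²) ds`. -/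
noncomputable def iharaSelbergMainTerm (t : ℝ) : ℝ :=
  (3 / (2 * Real.pi)) *
    ∫ s in (-(2 * Real.sqrt 2))..(2 * Real.sqrt 2),
      Real.exp (s * t) * Real.sqrt (8 - s ^ 2) / (9 - s ^ 2)

/-- The modified Bessel function of the first kind of nonnegative integer order:
`I_m(x) = ∑_{r=0}^∞ (x/2)^{m+2r}/(r!·(m+r)!)`. -/
noncomputable def besselI (m : ℕ) (x : ℝ) : ℝ :=
  ∑' r : ℕ, (x / 2) ^ (m + 2 * r) /
    ((Nat.factorial r : ℝ) * (Nat.factorial (m + r) : ℝ))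

/-- The geodesic term `F_ℓ(t) = ∑_{k=1}^∞ 2^{-kℓ/2}·I_{kℓ}(2√2·t)` of the explicit
Ihara-Selberg trace formula for cubic graphs (note `2^{kℓ/2} = (√2)^{kℓ}`). -/
noncomputable def geodesicTerm (ℓ : ℕ) (t : ℝ) : ℝ :=
  ∑' k : ℕ, (Real.sqrt 2 ^ ((k + 1) * ℓ))⁻¹ *
    besselI ((k + 1) * ℓ) (2 * Real.sqrt 2 * t)


open Nat Real

/-!
`I_m` is dominated termwise by `(x/2)^m/m! · exp((x/2)²)`, so `F_ℓ` converges, and each term of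
`I_m` scales like `I_m(cx) ≥ c^m I_m(x)`; hence `F_ℓ(2t) ≥ 2^ℓ F_ℓ(t) ≥ 8 F_ℓ(t) > 0` for `ℓ ≥ 3`.
On the other side the integrand of `J` is at most `e^{2√2|t|}/2`, because `√a ≤ (a + 1)/2`, which
gives `J(1/3) ≤ 3√2e/π < 4`. So `2J(1/3)F_ℓ(1/3) < 8F_ℓ(1/3) ≤ F_ℓ(2/3)`.
-/

lemma besselI_term_le (m r : ℕ) {x : ℝ} (hx : 0 ≤ x) :
    (x / 2) ^ (m + 2 * r) / ((r ! : ℝ) * ((m + r)! : ℝ)) ≤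
      (x / 2) ^ m / m ! * (((x / 2) ^ 2) ^ r / r !) := by
  have hfac : (m ! : ℝ) ≤ (m + r)! := by exact_mod_cast factorial_le (m.le_add_right r)
  calc (x / 2) ^ (m + 2 * r) / ((r ! : ℝ) * ((m + r)! : ℝ))
      ≤ (x / 2) ^ (m + 2 * r) / ((r ! : ℝ) * m !) := by gcongr
    _ = (x / 2) ^ m / m ! * (((x / 2) ^ 2) ^ r / r !) := by
      rw [pow_add, pow_mul]; field_simp

lemma summable_besselI_term (m : ℕ) (x : ℝ) :
    Summable fun r : ℕ ↦ (x / 2) ^ (m + 2 * r) / ((r ! : ℝ) * ((m + r)! : ℝ)) := by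
  refine .of_norm_bounded ((summable_pow_div_factorial ((|x| / 2) ^ 2)).mul_left
    ((|x| / 2) ^ m / m !)) fun r ↦ ?_
  have := besselI_term_le m r (abs_nonneg x)
  simpa [abs_div, abs_mul] using this

lemma besselI_nonneg (m : ℕ) {x : ℝ} (hx : 0 ≤ x) : 0 ≤ besselI m x :=
  tsum_nonneg fun _ ↦ by positivity

lemma besselI_pos (m : ℕ) {x : ℝ} (hx : 0 < x) : 0 < besselI m x :=
  (summable_besselI_term m x).tsum_pos (fun _ ↦ by positivity) 0 (by positivity)

lemma besselI_le (m : ℕ) {x : ℝ} (hx : 0 ≤ x) :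
    besselI m x ≤ (x / 2) ^ m / m ! * exp ((x / 2) ^ 2) := by
  have hexp := exp_eq_exp_ℝ ▸ NormedSpace.expSeries_div_hasSum_exp ((x / 2) ^ 2)
  rw [← (hexp.mul_left _).tsum_eq]
  exact (summable_besselI_term m x).tsum_le_tsum (besselI_term_le m · hx)
    (hexp.summable.mul_left _)

lemma pow_mul_besselI_le (m : ℕ) {c x : ℝ} (hc : 1 ≤ c) (hx : 0 ≤ x) :
    c ^ m * besselI m x ≤ besselI m (c * x) := by
  rw [besselI, besselI, ← tsum_mul_left]
  refine ((summable_besselI_term m x).mul_left _).tsum_le_tsum (fun r ↦ ?_)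
    (summable_besselI_term m (c * x))
  have hpow : c ^ m ≤ c ^ (m + 2 * r) := pow_le_pow_right₀ hc (m.le_add_right _)
  rw [mul_div_assoc c x 2, mul_pow, ← mul_div_assoc]
  gcongr

lemma geodesicTerm_term_le (n : ℕ) {t : ℝ} (ht : 0 ≤ t) :
    (√2 ^ n)⁻¹ * besselI n (2 * √2 * t) ≤ exp (2 * t ^ 2) * (t ^ n / n !) := by
  have hsq : √2 ^ 2 = 2 := sq_sqrt zero_le_two
  have hI := besselI_le n (x := 2 * √2 * t) (by positivity)
  rw [show 2 * √2 * t / 2 = √2 * t by ring, mul_pow, mul_pow, hsq] at hI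
  calc (√2 ^ n)⁻¹ * besselI n (2 * √2 * t)
      ≤ (√2 ^ n)⁻¹ * (√2 ^ n * t ^ n / n ! * exp (2 * t ^ 2)) := by gcongr
    _ = exp (2 * t ^ 2) * (t ^ n / n !) := by field_simp

lemma summable_geodesicTerm {ℓ : ℕ} (hℓ : ℓ ≠ 0) {t : ℝ} (ht : 0 ≤ t) :
    Summable fun k : ℕ ↦ (√2 ^ ((k + 1) * ℓ))⁻¹ * besselI ((k + 1) * ℓ) (2 * √2 * t) := by
  have hinj : Function.Injective fun k : ℕ ↦ (k + 1) * ℓ := fun a b h ↦ by simpa [hℓ] using h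
  refine .of_nonneg_of_le (fun k ↦ ?_) (fun k ↦ geodesicTerm_term_le _ ht)
    (((summable_pow_div_factorial t).comp_injective hinj).mul_left (exp (2 * t ^ 2)))
  have := besselI_nonneg ((k + 1) * ℓ) (x := 2 * √2 * t) (by positivity)
  positivity

lemma geodesicTerm_pos {ℓ : ℕ} (hℓ : ℓ ≠ 0) {t : ℝ} (ht : 0 < t) : 0 < geodesicTerm ℓ t := by
  refine (summable_geodesicTerm hℓ ht.le).tsum_pos (fun k ↦ ?_) 0 ?_
  · have := besselI_nonneg ((k + 1) * ℓ) (x := 2 * √2 * t) (by positivity)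
    positivity
  · have := besselI_pos ((0 + 1) * ℓ) (x := 2 * √2 * t) (by positivity)
    positivity

lemma pow_mul_geodesicTerm_le {ℓ : ℕ} (hℓ : ℓ ≠ 0) {c t : ℝ} (hc : 1 ≤ c) (ht : 0 ≤ t) :
    c ^ ℓ * geodesicTerm ℓ t ≤ geodesicTerm ℓ (c * t) := by
  rw [geodesicTerm, geodesicTerm, ← tsum_mul_left]
  refine ((summable_geodesicTerm hℓ ht).mul_left _).tsum_le_tsum (fun k ↦ ?_)
    (summable_geodesicTerm hℓ (by positivity))
  have hpow : c ^ ℓ ≤ c ^ ((k + 1) * ℓ) :=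
    pow_le_pow_right₀ hc (Nat.le_mul_of_pos_left ℓ k.succ_pos)
  have hI := pow_mul_besselI_le ((k + 1) * ℓ) hc (x := 2 * √2 * t) (by positivity)
  rw [show c * (2 * √2 * t) = 2 * √2 * (c * t) by ring] at hI
  have := besselI_nonneg ((k + 1) * ℓ) (x := 2 * √2 * t) (by positivity)
  calc c ^ ℓ * ((√2 ^ ((k + 1) * ℓ))⁻¹ * besselI ((k + 1) * ℓ) (2 * √2 * t))
      ≤ (√2 ^ ((k + 1) * ℓ))⁻¹ * (c ^ ((k + 1) * ℓ) * besselI ((k + 1) * ℓ) (2 * √2 * t)) := by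
        rw [mul_left_comm]; gcongr
    _ ≤ _ := by gcongr

lemma sqrt_div_add_one_le_half {a : ℝ} (ha : 0 ≤ a) : √a / (a + 1) ≤ 1 / 2 := by
  rw [div_le_div_iff₀ (by positivity) two_pos]
  nlinarith [sq_sqrt ha, sq_nonneg (√a - 1)]

lemma iharaSelbergMainTerm_le (t : ℝ) :
    iharaSelbergMainTerm t ≤ 3 * √2 * exp (2 * √2 * |t|) / π := by
  have hbound : ∀ s ∈ Set.uIoc (-(2 * √2)) (2 * √2),
      ‖exp (s * t) * √(8 - s ^ 2) / (9 - s ^ 2)‖ ≤ exp (2 * √2 * |t|) * (1 / 2) := by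
    intro s hs
    rw [Set.uIoc_of_le (neg_le_self (by positivity))] at hs
    have hs_abs : |s| ≤ 2 * √2 := abs_le.mpr ⟨hs.1.le, hs.2⟩
    have hs8 : s ^ 2 ≤ 8 := by
      nlinarith [sq_abs s, abs_nonneg s, sq_sqrt (zero_le_two (α := ℝ))]
    have hexp : exp (s * t) ≤ exp (2 * √2 * |t|) := by
      refine exp_le_exp.mpr ?_
      calc s * t ≤ |s| * |t| := by rw [← abs_mul]; exact le_abs_self _
        _ ≤ 2 * √2 * |t| := by gcongr
    have hfrac := sqrt_div_add_one_le_half (sub_nonneg.mpr hs8)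
    rw [show 8 - s ^ 2 + 1 = 9 - s ^ 2 by ring] at hfrac
    have hfrac_nonneg : 0 ≤ √(8 - s ^ 2) / (9 - s ^ 2) :=
      div_nonneg (sqrt_nonneg _) (by linarith)
    rw [mul_div_assoc, norm_mul, norm_of_nonneg (exp_pos _).le, norm_of_nonneg hfrac_nonneg]
    exact mul_le_mul hexp hfrac hfrac_nonneg (exp_pos _).le
  have hint := intervalIntegral.norm_integral_le_of_norm_le_const hbound
  rw [show 2 * √2 - -(2 * √2) = 4 * √2 by ring,
    abs_of_pos (show (0 : ℝ) < 4 * √2 by positivity)] at hint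
  calc iharaSelbergMainTerm t
      ≤ 3 / (2 * π) * (exp (2 * √2 * |t|) * (1 / 2) * (4 * √2)) := by
        rw [iharaSelbergMainTerm]
        gcongr
        exact (le_abs_self _).trans hint
    _ = 3 * √2 * exp (2 * √2 * |t|) / π := by field_simp; ring

lemma iharaSelbergMainTerm_one_third_lt_four : iharaSelbergMainTerm (1 / 3) < 4 := by
  have hsqrt : √2 < 1.4143 := by
    rw [sqrt_lt' (by norm_num)]; norm_num
  have hexp : exp (2 * √2 * |1 / 3|) ≤ exp 1 := by
    rw [abs_of_pos (by norm_num)]; gcongr; linarith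
  calc iharaSelbergMainTerm (1 / 3)
      ≤ 3 * √2 * exp 1 / π := (iharaSelbergMainTerm_le _).trans (by gcongr)
    _ < 4 := by
      rw [div_lt_iff₀ pi_pos]
      nlinarith [exp_one_lt_d9, pi_gt_d2, exp_pos 1, sqrt_nonneg 2]

/-- For every integer `ℓ ≥ 3`,
`F_ℓ(2/3) - 2·J(1/3)·F_ℓ(1/3) > 0`. -/
theorem geodesicTerm_variance_combination_pos (ℓ : ℕ) (hℓ : 3 ≤ ℓ) :
    0 < geodesicTerm ℓ (2 / 3) -
      2 * iharaSelbergMainTerm (1 / 3) * geodesicTerm ℓ (1 / 3) := by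
  have hℓ0 : ℓ ≠ 0 := by omega
  have hpos : 0 < geodesicTerm ℓ (1 / 3) := geodesicTerm_pos hℓ0 (by norm_num)
  have hdouble : 8 * geodesicTerm ℓ (1 / 3) ≤ geodesicTerm ℓ (2 / 3) :=
    calc 8 * geodesicTerm ℓ (1 / 3)
        ≤ 2 ^ ℓ * geodesicTerm ℓ (1 / 3) := by
          gcongr
          calc (8 : ℝ) = 2 ^ 3 := by norm_num
            _ ≤ 2 ^ ℓ := pow_le_pow_right₀ one_le_two hℓ
      _ ≤ geodesicTerm ℓ (2 * (1 / 3)) := pow_mul_geodesicTerm_le hℓ0 one_le_two (by norm_num)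
      _ = geodesicTerm ℓ (2 / 3) := by norm_num
  have hJ : 2 * iharaSelbergMainTerm (1 / 3) * geodesicTerm ℓ (1 / 3) <
      8 * geodesicTerm ℓ (1 / 3) := by
    have := iharaSelbergMainTerm_one_third_lt_four
    gcongr
    linarith
  linarith
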